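/- arXiv:2109.06414 — 2 statements merged into one kernel-verified Lean document; each statement's English description precedes it below -/
import Mathlib

section
/- Let X be a T1 space with at least three points. Then the diameter of the zero divisor graph Γ(C(X)_F) equals 3. -/
open SimpleGraph

/-- `f` belongs to `C(X)_F` : it is continuous outside some finite set. -/
def CF (X : Type*) [TopologicalSpace X] (f : X → ℝ) : Prop :=
  ∃ F : Set X, F.Finite ∧ ContinuousOn f Fᶜ

/-- `f` is a nonzero zero divisor of the ring `C(X)_F`. -/
def ZD (X : Type*) [TopologicalSpace X] (f : X → ℝ) : Prop :=
  CF X f ∧ f ≠ 0 ∧ ∃ g : X → ℝ, CF X g ∧ g ≠ 0 ∧ f * g = 0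

/-- The vertex set of the zero divisor graph of `C(X)_F`. -/
def Vtx (X : Type*) [TopologicalSpace X] := {f : X → ℝ // ZD X f}

/-- The zero divisor graph `Γ(C(X)_F)`: vertices are the nonzero zero divisors,
`f` and `g` adjacent iff `f ≠ g` and `f * g = 0`. -/
def Γ (X : Type*) [TopologicalSpace X] : SimpleGraph (Vtx X) where
  Adj f g := f ≠ g ∧ (f.1 * g.1 = 0)
  symm := ⟨fun f g ⟨h1, h2⟩ => ⟨h1.symm, by rw [mul_comm] at h2; exact h2⟩⟩
  loopless := ⟨fun f ⟨h, _⟩ => h rfl⟩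

/-- The zero set of a function. -/
def Z {X : Type*} (f : X → ℝ) : Set X := {x | f x = 0}

/-- The characteristic function of a point. -/
noncomputable def chi {X : Type*} (x : X) : X → ℝ := Set.indicator {x} (fun _ => 1)

section Aux

variable {X : Type*} [TopologicalSpace X]

omit [TopologicalSpace X] in
lemma chi_self (x : X) : chi x x = 1 := by simp [chi]

omit [TopologicalSpace X] in
lemma chi_ne {x y : X} (h : y ≠ x) : chi x y = 0 := by simp [chi, h]

lemma CF_chi (x : X) : CF X (chi x) := by
  refine ⟨{x}, Set.finite_singleton x, ?_⟩
  exact continuousOn_const.congr fun y hy => chi_ne (by simpa using hy)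

omit [TopologicalSpace X] in
lemma chi_nonzero (x : X) : chi x ≠ 0 := by
  intro h
  have := congrFun h x
  rw [chi_self] at this
  simp at this

omit [TopologicalSpace X] in
lemma chi_mul_chi {x y : X} (h : x ≠ y) : chi x * chi y = 0 := by
  funext t
  by_cases ht : t = x
  · subst ht
    have : chi y t = 0 := chi_ne h
    simp [this]
  · simp [chi_ne ht]

lemma ZD_chi (x : X) (hx : ∃ c : X, c ≠ x) : ZD X (chi x) := by
  obtain ⟨c, hc⟩ := hx
  exact ⟨CF_chi x, chi_nonzero x, chi c, CF_chi c, chi_nonzero c, chi_mul_chi (Ne.symm hc)⟩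

/-- If `f` is a vertex and `f a = 0` then `f` is adjacent to `chi a`. -/
lemma adj_chi {f : Vtx X} {a : X} (ha : f.1 a = 0) (hv : ZD X (chi a)) :
    (Γ X).Adj f ⟨chi a, hv⟩ := by
  constructor
  · intro h
    have : f.1 a = chi a a := congrFun (congrArg Subtype.val h) a
    rw [ha, chi_self] at this; simp at this
  · funext t
    by_cases ht : t = a
    · subst ht; simp [ha]
    · simp [chi_ne ht]

/-- Every vertex vanishes somewhere. -/
lemma exists_zero (f : Vtx X) : ∃ a : X, f.1 a = 0 := by
  obtain ⟨_, _, g, _, hg0, hfg⟩ := f.2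
  obtain ⟨b, hb⟩ : ∃ b, g b ≠ 0 := by
    by_contra h; push_neg at h; exact hg0 (funext h)
  exact ⟨b, by
    have := congrFun hfg b
    simp only [Pi.mul_apply, Pi.zero_apply] at this
    exact (mul_eq_zero.mp this).resolve_right hb⟩

/-- Generic: if two vertices are distinct, non-adjacent and share no common
neighbor, then every walk between them has length at least 3. -/
lemma three_le_walk_length {V : Type*} {Gr : SimpleGraph V} {u v : V}
    (h0 : u ≠ v) (h1 : ¬ Gr.Adj u v)
    (h2 : ∀ w : V, ¬ (Gr.Adj u w ∧ Gr.Adj w v)) :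
    ∀ p : Gr.Walk u v, 3 ≤ p.length := by
  intro p
  cases p with
  | nil => exact absurd rfl h0
  | cons ha q =>
    rename_i b
    cases q with
    | nil => exact absurd ha h1
    | cons hb r =>
      rename_i c
      cases r with
      | nil => exact absurd ⟨ha, hb⟩ (h2 b)
      | cons hc s => simp [SimpleGraph.Walk.length_cons]

end Aux

/-- If a T1 space `X` has at least three points, then `diam (Γ(C(X)_F)) = 3`:
any two vertices are joined by a path of length at most 3, and some pair of
vertices is at distance exactly 3. -/
theorem stmt12 {X : Type*} [TopologicalSpace X] [T1Space X]
    (h3 : ∃ x y z : X, x ≠ y ∧ y ≠ z ∧ x ≠ z) :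
    (Γ X).diam = 3 ∧
      (∀ f g : Vtx X, ∃ w : (Γ X).Walk f g, w.length ≤ 3) ∧
      (∃ f g : Vtx X, (Γ X).dist f g = 3) := by
  obtain ⟨x, y, z, hxy, hyz, hxz⟩ := h3
  have hne : ∀ a : X, ∃ c : X, c ≠ a := by
    intro a
    by_cases h : a = x
    · exact ⟨y, by rw [h]; exact Ne.symm hxy⟩
    · exact ⟨x, fun hc => h hc.symm⟩
  -- Part (b): walks of length ≤ 3
  have partb : ∀ f g : Vtx X, ∃ w : (Γ X).Walk f g, w.length ≤ 3 := by
    intro f g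
    obtain ⟨a, ha⟩ := exists_zero f
    obtain ⟨b, hb⟩ := exists_zero g
    have hva : ZD X (chi a) := ZD_chi a (hne a)
    have hvb : ZD X (chi b) := ZD_chi b (hne b)
    by_cases hab : a = b
    · subst hab
      refine ⟨SimpleGraph.Walk.cons (adj_chi ha hva)
        ((adj_chi hb hva).symm.toWalk), Nat.le_of_ble_eq_true rfl⟩
    · have hmid : (Γ X).Adj ⟨chi a, hva⟩ ⟨chi b, hvb⟩ := by
        constructor
        · intro h
          have : chi a a = chi b a := congrFun (congrArg Subtype.val h) a
          rw [chi_self, chi_ne hab] at this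
          simp at this
        · exact chi_mul_chi hab
      refine ⟨SimpleGraph.Walk.cons (adj_chi ha hva)
        (SimpleGraph.Walk.cons hmid ((adj_chi hb hvb).symm.toWalk)), Nat.le_of_ble_eq_true rfl⟩
  -- The distinguished pair
  have hfone : ∀ a t : X, t ≠ a → (1 - chi a) t = 1 := by
    intro a t ht; simp [chi_ne ht]
  have hfzero : ∀ a : X, (1 - chi a) a = 0 := by
    intro a; simp [chi_self]
  have hCFf : ∀ a : X, CF X (1 - chi a) := by
    intro a
    refine ⟨{a}, Set.finite_singleton a, ?_⟩
    exact continuousOn_const.congr fun t ht => hfone a t (by simpa using ht)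
  have hZDf : ∀ a : X, ZD X (1 - chi a) := by
    intro a
    refine ⟨hCFf a, ?_, chi a, CF_chi a, chi_nonzero a, ?_⟩
    · intro h
      obtain ⟨c, hc⟩ := hne a
      have := congrFun h c
      rw [hfone a c hc] at this; simp at this
    · funext t
      by_cases ht : t = a
      · subst ht; simp [hfzero]
      · simp [chi_ne ht]
  set F : Vtx X := ⟨1 - chi x, hZDf x⟩ with hF
  set G : Vtx X := ⟨1 - chi y, hZDf y⟩ with hG
  have hFG : F ≠ G := by
    intro h
    have : (1 - chi x) x = (1 - chi y) x := congrFun (congrArg Subtype.val h) x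
    rw [hfzero x, hfone y x hxy] at this
    simp at this
  have hnadj : ¬ (Γ X).Adj F G := by
    rintro ⟨-, h⟩
    have := congrFun h z
    simp only [Pi.mul_apply, Pi.zero_apply, hF, hG] at this
    rw [hfone x z (Ne.symm hxz), hfone y z (Ne.symm hyz)] at this
    simp at this
  have hnocommon : ∀ h : Vtx X, ¬ ((Γ X).Adj F h ∧ (Γ X).Adj h G) := by
    rintro h ⟨⟨-, h1⟩, ⟨-, h2⟩⟩
    apply h.2.2.1
    funext t
    by_cases ht : t = x
    · subst ht
      have := congrFun h2 t
      simp only [Pi.mul_apply, Pi.zero_apply, hG] at this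
      rw [hfone y t hxy] at this
      simpa using this
    · have := congrFun h1 t
      simp only [Pi.mul_apply, Pi.zero_apply, hF] at this
      rw [hfone x t ht] at this
      simpa using this
  have key : ∀ w : (Γ X).Walk F G, 3 ≤ w.length :=
    three_le_walk_length hFG hnadj hnocommon
  obtain ⟨w0, hw0⟩ := partb F G
  have hdist : (Γ X).dist F G = 3 := by
    have hle : (Γ X).dist F G ≤ 3 := le_trans (SimpleGraph.dist_le w0) hw0
    have hre : (Γ X).Reachable F G := ⟨w0⟩
    obtain ⟨p, hp⟩ := hre.exists_walk_length_eq_dist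
    have := key p
    omega
  refine ⟨?_, partb, F, G, hdist⟩
  have hediam : (Γ X).ediam = 3 := by
    apply le_antisymm
    · apply SimpleGraph.ediam_le_of_edist_le
      intro u v
      obtain ⟨w, hw⟩ := partb u v
      calc (Γ X).edist u v ≤ w.length := SimpleGraph.edist_le w
        _ ≤ 3 := by exact_mod_cast hw
    · have hre : (Γ X).Reachable F G := ⟨w0⟩
      have hnt : (Γ X).edist F G ≠ ⊤ := SimpleGraph.edist_ne_top_iff_reachable.mpr hre
      have hcast : (Γ X).edist F G = ((Γ X).dist F G : ℕ∞) :=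
        (ENat.coe_toNat hnt).symm
      calc (3 : ℕ∞) = (Γ X).edist F G := by rw [hcast, hdist]; rfl
        _ ≤ (Γ X).ediam := SimpleGraph.edist_le_ediam
  have : (Γ X).diam = ((Γ X).ediam).toNat := rfl
  rw [this, hediam]
  rfl
end

section
/- Let X be a T1 space with at least three points. Then the girth of the zero divisor graph Γ(C(X)_F) equals 3; concretely, for distinct x, y, z ∈ X the characteristic functions χ_{x}, χ_{y}, χ_{z} form a triangle (any two have product zero). -/
open SimpleGraph

lemma chi_mul_eq_zero {X : Type*} {x y : X} (hxy : x ≠ y) : chi x * chi y = 0 := by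
  funext t
  simp only [chi, Pi.mul_apply, Pi.zero_apply, Set.indicator_apply, Set.mem_singleton_iff]
  by_cases h : t = x
  · subst h
    simp [hxy]
  · simp [h]

lemma chi_ne_zero {X : Type*} (x : X) : chi x ≠ (0 : X → ℝ) := by
  intro h
  have := congrFun h x
  simp [chi] at this

lemma chi_CF {X : Type*} [TopologicalSpace X] (x : X) : CF X (chi x) := by
  refine ⟨{x}, Set.finite_singleton x, ?_⟩
  refine ContinuousOn.congr (continuousOn_const (c := (0 : ℝ))) ?_
  intro t ht
  simp only [Set.mem_compl_iff, Set.mem_singleton_iff] at ht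
  simp [chi, Set.indicator_apply, ht]

lemma chi_ZD {X : Type*} [TopologicalSpace X] {x y : X} (hxy : x ≠ y) : ZD X (chi x) :=
  ⟨chi_CF x, chi_ne_zero x, chi y, chi_CF y, chi_ne_zero y, chi_mul_eq_zero hxy⟩

lemma chi_vtx_ne {X : Type*} {x y : X} (hxy : x ≠ y) : chi x ≠ (chi y : X → ℝ) := by
  intro h
  have := congrFun h x
  simp [chi, Set.indicator_apply, hxy] at this

/-- If a T1 space `X` has at least three points, then the girth of `Γ(C(X)_F)` is 3;
concretely the characteristic functions of three distinct points pairwise multiply to 0. -/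
theorem stmt13 {X : Type*} [TopologicalSpace X] [T1Space X]
    (h3 : ∃ x y z : X, x ≠ y ∧ y ≠ z ∧ x ≠ z) :
    (Γ X).girth = 3 ∧
      ∀ x y z : X, x ≠ y → y ≠ z → x ≠ z →
        chi x * chi y = 0 ∧ chi y * chi z = 0 ∧ chi x * chi z = 0 := by
  obtain ⟨x, y, z, hxy, hyz, hxz⟩ := h3
  have hmain : ∀ x y z : X, x ≠ y → y ≠ z → x ≠ z →
      chi x * chi y = 0 ∧ chi y * chi z = 0 ∧ chi x * chi z = 0 := fun a b c h1 h2 h3 =>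
    ⟨chi_mul_eq_zero h1, chi_mul_eq_zero h2, chi_mul_eq_zero h3⟩
  refine ⟨?_, hmain⟩
  set a : Vtx X := ⟨chi x, chi_ZD hxy⟩ with ha
  set b : Vtx X := ⟨chi y, chi_ZD hyz⟩ with hb
  set c : Vtx X := ⟨chi z, chi_ZD hxz.symm⟩ with hc
  have hne_ab : a ≠ b := fun h => chi_vtx_ne hxy (congrArg Subtype.val h)
  have hne_bc : b ≠ c := fun h => chi_vtx_ne hyz (congrArg Subtype.val h)
  have hne_ca : c ≠ a := fun h => chi_vtx_ne hxz.symm (congrArg Subtype.val h)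
  have hab : (Γ X).Adj a b := ⟨hne_ab, chi_mul_eq_zero hxy⟩
  have hbc : (Γ X).Adj b c := ⟨hne_bc, chi_mul_eq_zero hyz⟩
  have hca : (Γ X).Adj c a := ⟨hne_ca, chi_mul_eq_zero hxz.symm⟩
  let w : (Γ X).Walk a a := Walk.cons hab (Walk.cons hbc (Walk.cons hca Walk.nil))
  have hw : w.IsCycle := by
    rw [Walk.cons_isCycle_iff, Walk.cons_isPath_iff, Walk.cons_isPath_iff]
    refine ⟨⟨⟨Walk.IsPath.nil, ?_⟩, ?_⟩, ?_⟩ <;>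
      simp [Sym2.eq, Sym2.rel_iff', hne_ab, hne_bc, hne_ca,
        hne_ab.symm, hne_bc.symm, hne_ca.symm]
  have hlen : w.length = 3 := rfl
  have h1 : (Γ X).egirth ≤ 3 := by
    have h := le_egirth.mp (le_refl (Γ X).egirth) a w hw
    rw [hlen] at h
    exact_mod_cast h
  have h2 : (3 : ℕ∞) ≤ (Γ X).egirth := three_le_egirth
  have heq : (Γ X).egirth = 3 := le_antisymm h1 h2
  simp [SimpleGraph.girth, heq]
end
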